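/- arXiv:math/0407485 — 3 statements merged into one kernel-verified Lean document; each statement's English description precedes it below -/
import Mathlib

section
/- Let A₁,…,Aₘ be real n×n matrices all of whose entries are nonnegative. Then ρ(A₁,…,Aₘ) = lim_{k→∞} ρ(A₁^{⊗k} + ··· + Aₘ^{⊗k})^{1/k}, where ρ(A₁^{⊗k} + ··· + Aₘ^{⊗k}) is the spectral radius of the single matrix A₁^{⊗k} + ··· + Aₘ^{⊗k}. -/
open scoped Kronecker

/-- The ℓ₂ operator norm of a square real matrix. -/
noncomputable def l2OpNorm {ι : Type*} [Fintype ι] [DecidableEq ι]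
    (A : Matrix ι ι ℝ) : ℝ :=
  ‖Matrix.toEuclideanCLM (𝕜 := ℝ) A‖

/-- The product `A_{σ_k} ⋯ A_{σ_1}` associated to the word `σ`. -/
noncomputable def wordProd {ι : Type*} [Fintype ι] [DecidableEq ι] {m k : ℕ}
    (A : Fin m → Matrix ι ι ℝ) (σ : Fin k → Fin m) : Matrix ι ι ℝ :=
  (List.ofFn fun i => A (σ i)).reverse.prod

/-- The joint spectral radius of `A₁, …, Aₘ` (w.r.t. the ℓ₂ operator norm). -/
noncomputable def jsr {ι : Type*} [Fintype ι] [DecidableEq ι] {m : ℕ}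
    (A : Fin m → Matrix ι ι ℝ) : ℝ :=
  Filter.atTop.limsup fun k : ℕ =>
    ⨆ σ : Fin k → Fin m, l2OpNorm (wordProd A σ) ^ ((1 : ℝ) / (k : ℝ))

/-- The spectral radius of a single matrix, `ρ(A) = lim_k ‖A^k‖^{1/k}`. -/
noncomputable def specRad {ι : Type*} [Fintype ι] [DecidableEq ι]
    (A : Matrix ι ι ℝ) : ℝ :=
  Filter.atTop.limsup fun k : ℕ => l2OpNorm (A ^ k) ^ ((1 : ℝ) / (k : ℝ))

/-- The `k`-th Kronecker power of a square matrix. -/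
noncomputable def kronPow {n : ℕ} (A : Matrix (Fin n) (Fin n) ℝ) :
    (k : ℕ) → Matrix (Fin (n ^ k)) (Fin (n ^ k)) ℝ
  | 0 => 1
  | k + 1 =>
    Matrix.reindex (finProdFinEquiv.trans (finCongr (pow_succ n k).symm))
      (finProdFinEquiv.trans (finCongr (pow_succ n k).symm))
      ((kronPow A k) ⊗ₖ A)
set_option synthInstance.maxHeartbeats 1000000

section JSRAux

open scoped Kronecker
open Filter Matrix

noncomputable def NN {ι : Type*} [Fintype ι] (B : Matrix ι ι ℝ) : ℝ :=
  ∑ a, ∑ b, |B a b|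

lemma NN_nonneg {ι : Type*} [Fintype ι] (B : Matrix ι ι ℝ) : 0 ≤ NN B :=
  Finset.sum_nonneg fun _ _ => Finset.sum_nonneg fun _ _ => abs_nonneg _

lemma abs_coord {ι : Type*} [Fintype ι] (y : EuclideanSpace ℝ ι) (a : ι) : |y a| ≤ ‖y‖ := by
  rw [EuclideanSpace.norm_eq, ← Real.sqrt_sq_eq_abs]
  apply Real.sqrt_le_sqrt
  have h : (y a) ^ 2 = ‖y a‖ ^ 2 := by rw [Real.norm_eq_abs, sq_abs]
  rw [h]
  exact Finset.single_le_sum (f := fun i => ‖y i‖ ^ 2) (fun i _ => sq_nonneg _)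
    (Finset.mem_univ a)

lemma entry_abs_le_l2 {ι : Type*} [Fintype ι] [DecidableEq ι] (B : Matrix ι ι ℝ) (a b : ι) :
    |B a b| ≤ l2OpNorm B := by
  set T := Matrix.toEuclideanCLM (𝕜 := ℝ) B with hT
  have happ : T (EuclideanSpace.single b (1:ℝ)) =
      (WithLp.equiv 2 _).symm (B.mulVec (Pi.single b 1)) := by
    rw [WithLp.equiv_symm_apply, ← EuclideanSpace.toLp_single, hT, Matrix.toEuclideanCLM_toLp]
  have hcoord : (T (EuclideanSpace.single b (1:ℝ))) a = B a b := by
    rw [happ]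
    simp [WithLp.equiv_symm_apply]
  calc |B a b| = |(T (EuclideanSpace.single b (1:ℝ))) a| := by rw [hcoord]
    _ ≤ ‖T (EuclideanSpace.single b (1:ℝ))‖ := abs_coord _ _
    _ ≤ ‖T‖ * ‖EuclideanSpace.single b (1:ℝ)‖ := ContinuousLinearMap.le_opNorm T _
    _ = l2OpNorm B := by simp [l2OpNorm, hT]

lemma l2_std_le {ι : Type*} [Fintype ι] [DecidableEq ι] (a b : ι) (c : ℝ) :
    ‖Matrix.toEuclideanCLM (𝕜 := ℝ) (Matrix.single a b c)‖ ≤ |c| := by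
  apply ContinuousLinearMap.opNorm_le_bound _ (abs_nonneg c)
  intro x
  have hx : x = (WithLp.equiv 2 _).symm (WithLp.equiv 2 _ x) := rfl
  rw [hx, WithLp.equiv_symm_apply, Matrix.toEuclideanCLM_toLp,
    Matrix.single_mulVec]
  have : (Function.update (0 : ι → ℝ) a (c * (WithLp.equiv 2 _ x) b)) =
      Pi.single a (c * (WithLp.equiv 2 _ x) b) := rfl
  rw [this, EuclideanSpace.toLp_single, EuclideanSpace.norm_single,
    Real.norm_eq_abs, abs_mul]
  exact mul_le_mul_of_nonneg_left (abs_coord x b) (abs_nonneg c)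

lemma l2_le_NN {ι : Type*} [Fintype ι] [DecidableEq ι] (B : Matrix ι ι ℝ) :
    l2OpNorm B ≤ NN B := by
  unfold l2OpNorm
  have hB : B = ∑ a, ∑ b, Matrix.single a b (B a b) :=
    Matrix.matrix_eq_sum_single B
  calc ‖Matrix.toEuclideanCLM (𝕜 := ℝ) B‖
      = ‖∑ a, ∑ b, Matrix.toEuclideanCLM (𝕜 := ℝ) (Matrix.single a b (B a b))‖ := by
        conv_lhs => rw [hB]
        rw [map_sum]
        congr 1
        exact Finset.sum_congr rfl fun a _ => map_sum _ _ _
    _ ≤ ∑ a, ∑ b, ‖Matrix.toEuclideanCLM (𝕜 := ℝ) (Matrix.single a b (B a b))‖ :=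
        (norm_sum_le _ _).trans (Finset.sum_le_sum fun a _ => norm_sum_le _ _)
    _ ≤ ∑ a, ∑ b, |B a b| :=
        Finset.sum_le_sum fun a _ => Finset.sum_le_sum fun b _ => l2_std_le a b _

lemma NN_le_l2 {ι : Type*} [Fintype ι] [DecidableEq ι] (B : Matrix ι ι ℝ) :
    NN B ≤ ((Fintype.card ι : ℝ)) ^ 2 * l2OpNorm B := by
  calc NN B ≤ ∑ _a : ι, ∑ _b : ι, l2OpNorm B :=
        Finset.sum_le_sum fun a _ => Finset.sum_le_sum fun b _ => entry_abs_le_l2 B a b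
    _ = ((Fintype.card ι : ℝ)) ^ 2 * l2OpNorm B := by
        simp [Finset.sum_const, nsmul_eq_mul, Finset.card_univ]
        ring


lemma NN_reindex {ι κ : Type*} [Fintype ι] [Fintype κ] (e : ι ≃ κ) (B : Matrix ι ι ℝ) :
    NN (Matrix.reindex e e B) = NN B := by
  unfold NN
  refine Fintype.sum_equiv e.symm _ _ fun a => ?_
  refine Fintype.sum_equiv e.symm _ _ fun b => ?_
  simp [Matrix.reindex_apply]

lemma NN_kron {ι κ : Type*} [Fintype ι] [Fintype κ] (B : Matrix ι ι ℝ) (C : Matrix κ κ ℝ) :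
    NN (B ⊗ₖ C) = NN B * NN C := by
  unfold NN
  rw [Fintype.sum_prod_type]
  have h1 : ∀ (a : ι) (b : κ), (∑ q : ι × κ, |(B ⊗ₖ C) (a, b) q|)
      = (∑ c, |B a c|) * (∑ d, |C b d|) := by
    intro a b
    rw [Fintype.sum_prod_type, Finset.sum_mul_sum]
    exact Finset.sum_congr rfl fun c _ => Finset.sum_congr rfl fun d _ => by
      rw [Matrix.kroneckerMap_apply, abs_mul]
  simp_rw [h1]
  rw [Finset.sum_mul]
  exact Finset.sum_congr rfl fun a _ => (Finset.mul_sum _ _ _).symm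

lemma NN_one {q : ℕ} : NN (1 : Matrix (Fin q) (Fin q) ℝ) = q := by
  unfold NN
  simp [Matrix.one_apply, apply_ite abs]

lemma NN_kronPow {n : ℕ} (B : Matrix (Fin n) (Fin n) ℝ) (k : ℕ) :
    NN (kronPow B k) = NN B ^ k := by
  induction k with
  | zero => rw [show kronPow B 0 = 1 from rfl, NN_one]; simp
  | succ k ih => rw [kronPow, NN_reindex, NN_kron, ih, pow_succ]

lemma kronPow_mul {n : ℕ} (B C : Matrix (Fin n) (Fin n) ℝ) (k : ℕ) :
    kronPow (B * C) k = kronPow B k * kronPow C k := by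
  induction k with
  | zero => exact (mul_one (1 : Matrix (Fin (n ^ 0)) (Fin (n ^ 0)) ℝ)).symm
  | succ k ih =>
    rw [kronPow, kronPow, kronPow, ih, Matrix.mul_kronecker_mul]
    simp only [Matrix.reindex_apply]
    rw [Matrix.submatrix_mul_equiv]

lemma kronPow_one {n : ℕ} (k : ℕ) :
    kronPow (1 : Matrix (Fin n) (Fin n) ℝ) k = 1 := by
  induction k with
  | zero => rfl
  | succ k ih =>
    rw [kronPow, ih, Matrix.one_kronecker_one]
    simp only [Matrix.reindex_apply]
    rw [Matrix.submatrix_one_equiv]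

lemma entry_nonneg_mul {ι : Type*} [Fintype ι] {B C : Matrix ι ι ℝ}
    (hB : ∀ a b, 0 ≤ B a b) (hC : ∀ a b, 0 ≤ C a b) : ∀ a b, 0 ≤ (B * C) a b := fun a b =>
  Finset.sum_nonneg fun j _ => mul_nonneg (hB a j) (hC j b)

lemma entry_nonneg_kronPow {n : ℕ} {B : Matrix (Fin n) (Fin n) ℝ}
    (hB : ∀ a b, 0 ≤ B a b) (k : ℕ) : ∀ a b, 0 ≤ kronPow B k a b := by
  induction k with
  | zero =>
    intro a b
    rw [show kronPow B 0 = 1 from rfl, Matrix.one_apply]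
    split <;> norm_num
  | succ k ih =>
    intro a b
    rw [kronPow]
    simp only [Matrix.reindex_apply, Matrix.submatrix_apply]
    exact mul_nonneg (ih _ _) (hB _ _)

lemma wordProd_zero {ι : Type*} [Fintype ι] [DecidableEq ι] {m : ℕ}
    (A : Fin m → Matrix ι ι ℝ) (σ : Fin 0 → Fin m) : wordProd A σ = 1 := by
  simp [wordProd]

lemma wordProd_cons {ι : Type*} [Fintype ι] [DecidableEq ι] {m p : ℕ}
    (A : Fin m → Matrix ι ι ℝ) (i : Fin m) (τ : Fin p → Fin m) :
    wordProd A (Fin.cons i τ) = wordProd A τ * A i := by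
  unfold wordProd
  rw [List.ofFn_succ]
  simp [List.prod_concat]

lemma entry_nonneg_wordProd {ι : Type*} [Fintype ι] [DecidableEq ι] {m : ℕ}
    {A : Fin m → Matrix ι ι ℝ} (hA : ∀ i a b, 0 ≤ A i a b) :
    ∀ {p : ℕ} (σ : Fin p → Fin m) (a b : ι), 0 ≤ wordProd A σ a b := by
  intro p
  induction p with
  | zero =>
    intro σ a b
    rw [wordProd_zero]
    rw [Matrix.one_apply]
    split <;> norm_num
  | succ p ih =>
    intro σ a b
    rw [← Fin.cons_self_tail σ, wordProd_cons]
    exact entry_nonneg_mul (fun a b => ih _ a b) (hA _) a b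

lemma NN_mul_le {ι : Type*} [Fintype ι] (B C : Matrix ι ι ℝ) :
    NN (B * C) ≤ NN B * NN C := by
  unfold NN
  calc ∑ a, ∑ c, |(B * C) a c|
      ≤ ∑ a, ∑ c, ∑ b, |B a b| * |C b c| := by
        refine Finset.sum_le_sum fun a _ => Finset.sum_le_sum fun c _ => ?_
        rw [Matrix.mul_apply]
        refine (Finset.abs_sum_le_sum_abs _ _).trans ?_
        exact Finset.sum_le_sum fun b _ => le_of_eq (abs_mul _ _)
    _ = ∑ b, (∑ a, |B a b|) * (∑ c, |C b c|) := by
        have h1 : ∀ a, ∑ c, ∑ b, |B a b| * |C b c| = ∑ b, |B a b| * ∑ c, |C b c| := by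
          intro a
          rw [Finset.sum_comm]
          exact Finset.sum_congr rfl fun b _ => (Finset.mul_sum _ _ _).symm
        simp_rw [h1]
        rw [Finset.sum_comm]
        exact Finset.sum_congr rfl fun b _ => (Finset.sum_mul _ _ _).symm
    _ ≤ ∑ b, (∑ a, |B a b|) * (∑ b', ∑ c, |C b' c|) := by
        refine Finset.sum_le_sum fun b _ => ?_
        refine mul_le_mul_of_nonneg_left ?_ (Finset.sum_nonneg fun _ _ => abs_nonneg _)
        exact Finset.single_le_sum (f := fun b' => ∑ c, |C b' c|)
          (fun _ _ => Finset.sum_nonneg fun _ _ => abs_nonneg _) (Finset.mem_univ b)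
    _ = (∑ a, ∑ b, |B a b|) * (∑ b, ∑ c, |C b c|) := by
        rw [← Finset.sum_mul, Finset.sum_comm]
lemma NN_sum_le {ι γ : Type*} [Fintype ι] [Fintype γ] (F : γ → Matrix ι ι ℝ) :
    NN (∑ j, F j) ≤ ∑ j, NN (F j) := by
  unfold NN
  calc ∑ a, ∑ b, |(∑ j, F j) a b| ≤ ∑ a, ∑ b, ∑ j, |F j a b| := by
        refine Finset.sum_le_sum fun a _ => Finset.sum_le_sum fun b _ => ?_
        simp only [Matrix.sum_apply]
        exact Finset.abs_sum_le_sum_abs _ _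
    _ = ∑ j, ∑ a, ∑ b, |F j a b| := by
        have h : ∀ a, (∑ b, ∑ j, |F j a b|) = ∑ j, ∑ b, |F j a b| := fun a =>
          Finset.sum_comm
        simp_rw [h]
        exact Finset.sum_comm

lemma le_NN_sum {ι γ : Type*} [Fintype ι] [Fintype γ] (F : γ → Matrix ι ι ℝ)
    (hF : ∀ j a b, 0 ≤ F j a b) (j₀ : γ) :
    NN (F j₀) ≤ NN (∑ j, F j) := by
  unfold NN
  refine Finset.sum_le_sum fun a _ => Finset.sum_le_sum fun b _ => ?_
  rw [abs_of_nonneg (hF j₀ a b), abs_of_nonneg]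
  · simp only [Matrix.sum_apply]
    exact Finset.single_le_sum (f := fun j => F j a b) (fun j _ => hF j a b)
      (Finset.mem_univ j₀)
  · simp only [Matrix.sum_apply]
    exact Finset.sum_nonneg fun j _ => hF j a b

lemma sum_kronPow_pow {n m k : ℕ} (A : Fin m → Matrix (Fin n) (Fin n) ℝ) (p : ℕ) :
    (∑ i, kronPow (A i) k) ^ p = ∑ σ : Fin p → Fin m, kronPow (wordProd A σ) k := by
  induction p with
  | zero =>
    rw [pow_zero, Fintype.sum_unique (fun σ : Fin 0 → Fin m => kronPow (wordProd A σ) k),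
      wordProd_zero, kronPow_one]
  | succ p ih =>
    have hre : ∑ σ : Fin (p+1) → Fin m, kronPow (wordProd A σ) k
        = ∑ q : Fin m × (Fin p → Fin m), kronPow (wordProd A (Fin.cons q.1 q.2)) k :=
      (Fintype.sum_equiv (Fin.consEquiv fun _ => Fin m)
        (fun q => kronPow (wordProd A (Fin.cons q.1 q.2)) k)
        (fun σ => kronPow (wordProd A σ) k) (fun q => rfl)).symm
    rw [pow_succ, ih, Finset.sum_mul_sum, hre, Fintype.sum_prod_type, Finset.sum_comm]
    refine Finset.sum_congr rfl fun τ _ => Finset.sum_congr rfl fun i _ => ?_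
    rw [wordProd_cons, kronPow_mul]

lemma NN_one' {ι : Type*} [Fintype ι] [DecidableEq ι] :
    NN (1 : Matrix ι ι ℝ) = (Fintype.card ι : ℝ) := by
  unfold NN
  simp [Matrix.one_apply, apply_ite abs, Finset.card_univ]

lemma NN_wordProd_le {ι : Type*} [Fintype ι] [DecidableEq ι] {m : ℕ}
    (A : Fin m → Matrix ι ι ℝ) {C : ℝ} (hC : ∀ i, NN (A i) ≤ C) (hC0 : 0 ≤ C) :
    ∀ {p : ℕ} (σ : Fin p → Fin m),
      NN (wordProd A σ) ≤ (Fintype.card ι : ℝ) * C ^ p := by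
  intro p
  induction p with
  | zero =>
    intro σ
    rw [wordProd_zero, NN_one', pow_zero, mul_one]
  | succ p ih =>
    intro σ
    rw [← Fin.cons_self_tail σ, wordProd_cons]
    calc NN (wordProd A (Fin.tail σ) * A (σ 0))
        ≤ NN (wordProd A (Fin.tail σ)) * NN (A (σ 0)) := NN_mul_le _ _
      _ ≤ ((Fintype.card ι : ℝ) * C ^ p) * C := by
          apply mul_le_mul (ih _) (hC _) (NN_nonneg _)
          positivity
      _ = (Fintype.card ι : ℝ) * C ^ (p + 1) := by ring

lemma tendsto_rpow_one_div {c : ℝ} (hc : 0 < c) :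
    Filter.Tendsto (fun p : ℕ => c ^ ((1:ℝ)/(p:ℝ))) Filter.atTop (nhds 1) := by
  have h0 : Filter.Tendsto (fun p : ℕ => (1:ℝ)/(p:ℝ)) Filter.atTop (nhds 0) :=
    tendsto_one_div_atTop_nhds_zero_nat
  have := (tendsto_const_nhds (x := c) (f := Filter.atTop (α := ℕ))).rpow h0
    (Or.inl (ne_of_gt hc))
  simpa using this

lemma limsup_le_limsup_of_rpow_factor {u v : ℕ → ℝ} {c K : ℝ} (hc : 1 ≤ c)
    (h : ∀ᶠ p in Filter.atTop, u p ≤ c ^ ((1:ℝ)/(p:ℝ)) * v p)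
    (hu0 : ∀ p, 0 ≤ u p) (hv0 : ∀ p, 0 ≤ v p) (hvK : ∀ p, v p ≤ K) :
    Filter.limsup u Filter.atTop ≤ Filter.limsup v Filter.atTop := by
  have hvb : Filter.IsBoundedUnder (· ≤ ·) Filter.atTop v :=
    Filter.isBoundedUnder_of ⟨K, hvK⟩
  have hucb : Filter.IsCoboundedUnder (· ≤ ·) Filter.atTop u :=
    Filter.isCoboundedUnder_le_of_le Filter.atTop hu0
  set L := Filter.limsup v Filter.atTop with hLdef
  have hL0 : 0 ≤ L :=
    Filter.le_limsup_of_frequently_le (Filter.Frequently.of_forall hv0) hvb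
  by_contra hcon
  push_neg at hcon
  set M := Filter.limsup u Filter.atTop with hMdef
  set a := (L + M)/2 with hadef
  have haL : L < a := by rw [hadef]; linarith
  have halt : a < M := by rw [hadef]; linarith
  set b := (L + a)/2 with hbdef
  have hLb : L < b := by rw [hbdef]; linarith
  have hba : b < a := by rw [hbdef]; linarith
  have hb0 : 0 < b := by rw [hbdef]; linarith
  have hev1 : ∀ᶠ p in Filter.atTop, v p < b := Filter.eventually_lt_of_limsup_lt hLb hvb
  have hc0 : (0:ℝ) < c := lt_of_lt_of_le one_pos hc
  have hab : 1 < a / b := (one_lt_div hb0).mpr hba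
  have hev2 : ∀ᶠ p : ℕ in Filter.atTop, c ^ ((1:ℝ)/(p:ℝ)) < a / b :=
    (tendsto_rpow_one_div hc0).eventually_lt_const hab
  have hua : ∀ᶠ p in Filter.atTop, u p ≤ a := by
    filter_upwards [h, hev1, hev2] with p h1 h2 h3
    calc u p ≤ c ^ ((1:ℝ)/(p:ℝ)) * v p := h1
      _ ≤ (a / b) * b := by
          apply mul_le_mul h3.le h2.le (hv0 p) (div_nonneg (by linarith) hb0.le)
      _ = a := div_mul_cancel₀ a (ne_of_gt hb0)
  have : M ≤ a := Filter.limsup_le_of_le hucb hua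
  linarith

lemma l2_nonneg {ι : Type*} [Fintype ι] [DecidableEq ι] (B : Matrix ι ι ℝ) :
    0 ≤ l2OpNorm B := norm_nonneg _

lemma rpow_pow_comm {x : ℝ} (hx : 0 ≤ x) (k : ℕ) (q : ℝ) :
    (x ^ ((1:ℝ)/q)) ^ k = (x ^ k) ^ ((1:ℝ)/q) := by
  rw [← Real.rpow_natCast (x ^ ((1:ℝ)/q)) k, ← Real.rpow_mul hx,
    ← Real.rpow_natCast x k, ← Real.rpow_mul hx, mul_comm]

lemma rpow_nat_root {x : ℝ} (hx : 0 ≤ x) {k : ℕ} (hk : k ≠ 0) :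
    (x ^ k) ^ ((1:ℝ)/(k:ℝ)) = x := by
  rw [← Real.rpow_natCast x k, ← Real.rpow_mul hx, mul_one_div,
    div_self (Nat.cast_ne_zero.mpr hk), Real.rpow_one]

section main

variable {n m : ℕ}

/-- sup over words of `NN`-norm to the `1/p`. -/
noncomputable def vS (A : Fin m → Matrix (Fin n) (Fin n) ℝ) (p : ℕ) : ℝ :=
  ⨆ σ : Fin p → Fin m, NN (wordProd A σ) ^ ((1:ℝ)/(p:ℝ))

noncomputable def CC (A : Fin m → Matrix (Fin n) (Fin n) ℝ) : ℝ := 1 + ∑ i, NN (A i)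

noncomputable def KV (A : Fin m → Matrix (Fin n) (Fin n) ℝ) : ℝ :=
  max 1 ((max 1 (n:ℝ)) * CC A)

variable {A : Fin m → Matrix (Fin n) (Fin n) ℝ}

lemma one_le_CC : 1 ≤ CC A := by
  have : 0 ≤ ∑ i, NN (A i) := Finset.sum_nonneg fun i _ => NN_nonneg _
  unfold CC; linarith

lemma CC_nonneg : 0 ≤ CC A := le_trans zero_le_one one_le_CC

lemma NN_le_CC (i : Fin m) : NN (A i) ≤ CC A := by
  have h1 : NN (A i) ≤ ∑ j, NN (A j) :=
    Finset.single_le_sum (f := fun j => NN (A j)) (fun j _ => NN_nonneg _) (Finset.mem_univ i)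
  unfold CC; linarith

lemma bddA {p : ℕ} (f : (Fin p → Fin m) → ℝ) : BddAbove (Set.range f) :=
  (Set.finite_range f).bddAbove

lemma NN_wordProd_le' {p : ℕ} (σ : Fin p → Fin m) :
    NN (wordProd A σ) ≤ (n:ℝ) * CC A ^ p := by
  have := NN_wordProd_le A (fun i => NN_le_CC i) CC_nonneg σ
  simpa [Fintype.card_fin] using this

lemma one_le_KV : 1 ≤ KV A := le_max_left _ _

lemma vS_zero (hm : 0 < m) : vS A 0 = 1 := by
  haveI : Nonempty (Fin m) := ⟨⟨0, hm⟩⟩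
  unfold vS
  norm_num [Real.rpow_zero, ciSup_const]

lemma vS_eq_argmax (hm : 0 < m) (p : ℕ) {σ₀ : Fin p → Fin m}
    (hσ₀ : ∀ σ : Fin p → Fin m, NN (wordProd A σ) ≤ NN (wordProd A σ₀)) :
    vS A p = NN (wordProd A σ₀) ^ ((1:ℝ)/(p:ℝ)) := by
  haveI : Nonempty (Fin m) := ⟨⟨0, hm⟩⟩
  unfold vS
  apply le_antisymm
  · exact ciSup_le fun σ => Real.rpow_le_rpow (NN_nonneg _) (hσ₀ σ) (by positivity)
  · exact le_ciSup (f := fun σ : Fin p → Fin m => NN (wordProd A σ) ^ ((1:ℝ)/(p:ℝ)))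
      (bddA _) σ₀

lemma vS_nonneg (hm : 0 < m) (p : ℕ) : 0 ≤ vS A p := by
  haveI : Nonempty (Fin m) := ⟨⟨0, hm⟩⟩
  unfold vS
  exact le_trans (Real.rpow_nonneg (NN_nonneg _) _)
    (le_ciSup (f := fun σ : Fin p → Fin m => NN (wordProd A σ) ^ ((1:ℝ)/(p:ℝ)))
      (bddA _) (Classical.arbitrary _))

lemma vS_le_KV (hm : 0 < m) (p : ℕ) : vS A p ≤ KV A := by
  haveI : Nonempty (Fin m) := ⟨⟨0, hm⟩⟩
  rcases Nat.eq_zero_or_pos p with hp | hp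
  · subst hp; rw [vS_zero hm]; exact one_le_KV
  unfold vS
  refine ciSup_le fun σ => ?_
  have hC0 : (0:ℝ) ≤ CC A := CC_nonneg
  have h1 : NN (wordProd A σ) ^ ((1:ℝ)/(p:ℝ)) ≤ ((n:ℝ) * CC A ^ p) ^ ((1:ℝ)/(p:ℝ)) :=
    Real.rpow_le_rpow (NN_nonneg _) (NN_wordProd_le' σ) (by positivity)
  have h2 : ((n:ℝ) * CC A ^ p) ^ ((1:ℝ)/(p:ℝ))
      = (n:ℝ) ^ ((1:ℝ)/(p:ℝ)) * CC A := by
    rw [Real.mul_rpow (by positivity) (by positivity), rpow_nat_root hC0 hp.ne']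
  have h3 : (n:ℝ) ^ ((1:ℝ)/(p:ℝ)) ≤ max 1 (n:ℝ) := by
    rcases le_or_gt (n:ℝ) 1 with hn | hn
    · exact le_trans (Real.rpow_le_one (by positivity) hn (by positivity)) (le_max_left _ _)
    · refine le_trans ?_ (le_max_right _ _)
      calc (n:ℝ) ^ ((1:ℝ)/(p:ℝ)) ≤ (n:ℝ) ^ (1:ℝ) := by
            apply Real.rpow_le_rpow_of_exponent_le hn.le
            rw [div_le_one (by exact_mod_cast hp)]
            exact_mod_cast hp
        _ = (n:ℝ) := Real.rpow_one _
  calc NN (wordProd A σ) ^ ((1:ℝ)/(p:ℝ)) ≤ (n:ℝ) ^ ((1:ℝ)/(p:ℝ)) * CC A := h1.trans h2.le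
    _ ≤ (max 1 (n:ℝ)) * CC A := mul_le_mul_of_nonneg_right h3 hC0
    _ ≤ KV A := le_max_right _ _

lemma uS_le_vS (hm : 0 < m) (p : ℕ) :
    (⨆ σ : Fin p → Fin m, l2OpNorm (wordProd A σ) ^ ((1:ℝ)/(p:ℝ))) ≤ vS A p := by
  haveI : Nonempty (Fin m) := ⟨⟨0, hm⟩⟩
  unfold vS
  refine ciSup_le fun σ => ?_
  exact le_trans (Real.rpow_le_rpow (l2_nonneg _) (l2_le_NN _) (by positivity))
    (le_ciSup (f := fun σ : Fin p → Fin m => NN (wordProd A σ) ^ ((1:ℝ)/(p:ℝ)))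
      (bddA _) σ)

lemma uS_nonneg (hm : 0 < m) (p : ℕ) :
    0 ≤ ⨆ σ : Fin p → Fin m, l2OpNorm (wordProd A σ) ^ ((1:ℝ)/(p:ℝ)) := by
  haveI : Nonempty (Fin m) := ⟨⟨0, hm⟩⟩
  exact le_trans (Real.rpow_nonneg (l2_nonneg _) _)
    (le_ciSup (f := fun σ : Fin p → Fin m => l2OpNorm (wordProd A σ) ^ ((1:ℝ)/(p:ℝ)))
      (bddA _) (Classical.arbitrary _))

lemma jsr_eq_limsup_vS (hm : 0 < m) : jsr A = Filter.limsup (vS A) Filter.atTop := by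
  haveI : Nonempty (Fin m) := ⟨⟨0, hm⟩⟩
  rw [show jsr A = Filter.limsup (fun p : ℕ =>
    ⨆ σ : Fin p → Fin m, l2OpNorm (wordProd A σ) ^ ((1:ℝ)/(p:ℝ))) Filter.atTop from rfl]
  refine le_antisymm ?_ ?_
  · refine Filter.limsup_le_limsup (Filter.Eventually.of_forall (uS_le_vS hm))
      (Filter.isCoboundedUnder_le_of_le Filter.atTop (uS_nonneg hm)) ?_
    exact Filter.isBoundedUnder_of ⟨KV A, vS_le_KV hm⟩
  · refine limsup_le_limsup_of_rpow_factor (c := (n:ℝ)^2 + 1) (K := KV A)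
      (by nlinarith [sq_nonneg (n:ℝ)]) ?_ (vS_nonneg hm) (uS_nonneg hm)
      (fun p => (uS_le_vS hm p).trans (vS_le_KV hm p))
    refine Filter.Eventually.of_forall fun p => ?_
    obtain ⟨σ₀, hσ₀⟩ := Finite.exists_max (fun σ : Fin p → Fin m => NN (wordProd A σ))
    rw [vS_eq_argmax hm p hσ₀]
    have hNle : NN (wordProd A σ₀) ≤ ((n:ℝ)^2 + 1) * l2OpNorm (wordProd A σ₀) := by
      have h := NN_le_l2 (wordProd A σ₀)
      have hl2 : 0 ≤ l2OpNorm (wordProd A σ₀) := l2_nonneg _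
      rw [Fintype.card_fin] at h
      nlinarith
    calc NN (wordProd A σ₀) ^ ((1:ℝ)/(p:ℝ))
        ≤ (((n:ℝ)^2 + 1) * l2OpNorm (wordProd A σ₀)) ^ ((1:ℝ)/(p:ℝ)) :=
          Real.rpow_le_rpow (NN_nonneg _) hNle (by positivity)
      _ = ((n:ℝ)^2 + 1) ^ ((1:ℝ)/(p:ℝ)) * l2OpNorm (wordProd A σ₀) ^ ((1:ℝ)/(p:ℝ)) :=
          Real.mul_rpow (by positivity) (l2_nonneg _)
      _ ≤ ((n:ℝ)^2 + 1) ^ ((1:ℝ)/(p:ℝ))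
            * ⨆ σ : Fin p → Fin m, l2OpNorm (wordProd A σ) ^ ((1:ℝ)/(p:ℝ)) := by
          exact mul_le_mul_of_nonneg_left
            (le_ciSup (f := fun σ : Fin p → Fin m =>
              l2OpNorm (wordProd A σ) ^ ((1:ℝ)/(p:ℝ))) (bddA _) σ₀)
            (Real.rpow_nonneg (by positivity) _)


lemma specRad_bounds (hm : 0 < m) (hpos : ∀ i a b, 0 ≤ A i a b) (k : ℕ) :
    (Filter.limsup (vS A) Filter.atTop) ^ k ≤ specRad (∑ i, kronPow (A i) k) ∧
    specRad (∑ i, kronPow (A i) k) ≤ (m:ℝ) * (Filter.limsup (vS A) Filter.atTop) ^ k := by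
  haveI : Nonempty (Fin m) := ⟨⟨0, hm⟩⟩
  set S := ∑ i, kronPow (A i) k with hS
  set r := Filter.limsup (vS A) Filter.atTop with hr
  set w : ℕ → ℝ := fun p => l2OpNorm (S ^ p) ^ ((1:ℝ)/(p:ℝ)) with hw
  have hspec : specRad S = Filter.limsup w Filter.atTop := rfl
  set φ : ℕ → ℝ := fun p => (vS A p) ^ k with hφ
  have hWnn : ∀ {p : ℕ} (σ : Fin p → Fin m) (a b : Fin n), 0 ≤ wordProd A σ a b :=
    fun σ a b => entry_nonneg_wordProd hpos σ a b
  have hkronnn : ∀ {p : ℕ} (σ : Fin p → Fin m) a b, 0 ≤ kronPow (wordProd A σ) k a b :=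
    fun σ a b => entry_nonneg_kronPow (fun a b => hWnn σ a b) k a b
  have hSpow : ∀ p, S ^ p = ∑ σ : Fin p → Fin m, kronPow (wordProd A σ) k :=
    sum_kronPow_pow A
  have hm' : (1:ℝ) ≤ (m:ℝ) := by exact_mod_cast hm
  have hφzero : φ 0 = 1 := by
    show (vS A 0) ^ k = 1
    rw [vS_zero hm, one_pow]
  have hwzero : w 0 = 1 := by
    show l2OpNorm (S ^ 0) ^ ((1:ℝ)/((0:ℕ):ℝ)) = 1
    norm_num
  have hB : ∀ p, w p ≤ (m:ℝ) * φ p := by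
    intro p
    rcases Nat.eq_zero_or_pos p with hp | hp
    · subst hp
      rw [hwzero, hφzero, mul_one]
      exact hm'
    · obtain ⟨σ₀, hσ₀⟩ := Finite.exists_max (fun σ : Fin p → Fin m => NN (wordProd A σ))
      have hNS : NN (S ^ p) ≤ (m:ℝ)^p * NN (wordProd A σ₀) ^ k := by
        rw [hSpow p]
        refine (NN_sum_le _).trans ?_
        calc ∑ σ : Fin p → Fin m, NN (kronPow (wordProd A σ) k)
            = ∑ σ : Fin p → Fin m, NN (wordProd A σ) ^ k :=
              Finset.sum_congr rfl fun σ _ => NN_kronPow _ _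
          _ ≤ ∑ _σ : Fin p → Fin m, NN (wordProd A σ₀) ^ k :=
              Finset.sum_le_sum fun σ _ => pow_le_pow_left₀ (NN_nonneg _) (hσ₀ σ) k
          _ = (Fintype.card (Fin p → Fin m) : ℝ) * NN (wordProd A σ₀) ^ k := by
              rw [Finset.sum_const, Finset.card_univ, nsmul_eq_mul]
          _ = (m:ℝ)^p * NN (wordProd A σ₀) ^ k := by
              rw [Fintype.card_fun, Fintype.card_fin, Fintype.card_fin]
              push_cast
              ring
      have hl2NN : l2OpNorm (S ^ p) ≤ (m:ℝ)^p * NN (wordProd A σ₀) ^ k :=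
        (l2_le_NN _).trans hNS
      have hstep : w p ≤ ((m:ℝ)^p * NN (wordProd A σ₀) ^ k) ^ ((1:ℝ)/(p:ℝ)) :=
        Real.rpow_le_rpow (l2_nonneg _) hl2NN (by positivity)
      refine hstep.trans (le_of_eq ?_)
      rw [Real.mul_rpow (by positivity) (pow_nonneg (NN_nonneg _) k),
        rpow_nat_root (by positivity : (0:ℝ) ≤ (m:ℝ)) hp.ne',
        ← rpow_pow_comm (NN_nonneg _) k, ← vS_eq_argmax hm p hσ₀]
  set c := ((n ^ k : ℕ) : ℝ)^2 + 1 with hc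
  have hc1 : 1 ≤ c := by nlinarith [sq_nonneg ((n ^ k : ℕ) : ℝ)]
  have hA : ∀ p, φ p ≤ c ^ ((1:ℝ)/(p:ℝ)) * w p := by
    intro p
    rcases Nat.eq_zero_or_pos p with hp | hp
    · subst hp
      rw [hwzero, hφzero]
      norm_num
    · obtain ⟨σ₀, hσ₀⟩ := Finite.exists_max (fun σ : Fin p → Fin m => NN (wordProd A σ))
      have h2 : NN (kronPow (wordProd A σ₀) k) ≤ NN (S ^ p) := by
        rw [hSpow p]
        exact le_NN_sum _ (fun σ a b => hkronnn σ a b) σ₀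
      have h3 : NN (S ^ p) ≤ c * l2OpNorm (S ^ p) := by
        have h := NN_le_l2 (S ^ p)
        have hl2 : 0 ≤ l2OpNorm (S ^ p) := l2_nonneg _
        rw [Fintype.card_fin] at h
        nlinarith
      have h4 : NN (wordProd A σ₀) ^ k ≤ c * l2OpNorm (S ^ p) := by
        rw [← NN_kronPow]
        exact h2.trans h3
      calc φ p = (NN (wordProd A σ₀) ^ ((1:ℝ)/(p:ℝ))) ^ k := by
            show (vS A p) ^ k = _
            rw [vS_eq_argmax hm p hσ₀]
        _ = (NN (wordProd A σ₀) ^ k) ^ ((1:ℝ)/(p:ℝ)) := rpow_pow_comm (NN_nonneg _) k _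
        _ ≤ (c * l2OpNorm (S ^ p)) ^ ((1:ℝ)/(p:ℝ)) :=
            Real.rpow_le_rpow (pow_nonneg (NN_nonneg _) k) h4 (by positivity)
        _ = c ^ ((1:ℝ)/(p:ℝ)) * w p := Real.mul_rpow (by linarith) (l2_nonneg _)
  have hφ0 : ∀ p, 0 ≤ φ p := fun p => pow_nonneg (vS_nonneg hm p) k
  have hφK : ∀ p, φ p ≤ (KV A) ^ k := fun p =>
    pow_le_pow_left₀ (vS_nonneg hm p) (vS_le_KV hm p) k
  have hw0 : ∀ p, 0 ≤ w p := fun p => Real.rpow_nonneg (l2_nonneg _) _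
  have hwK : ∀ p, w p ≤ (m:ℝ) * (KV A) ^ k := fun p =>
    (hB p).trans (mul_le_mul_of_nonneg_left (hφK p) (by positivity))
  have hvb : Filter.IsBoundedUnder (· ≤ ·) Filter.atTop (vS A) :=
    Filter.isBoundedUnder_of ⟨KV A, vS_le_KV hm⟩
  have hvcb : Filter.IsCoboundedUnder (· ≤ ·) Filter.atTop (vS A) :=
    Filter.isCoboundedUnder_le_of_le Filter.atTop (vS_nonneg hm)
  have hr0 : 0 ≤ r :=
    Filter.le_limsup_of_frequently_le (Filter.Frequently.of_forall (vS_nonneg hm)) hvb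
  have hmono : Monotone (fun x : ℝ => (max x 0) ^ k) := fun x y hxy =>
    pow_le_pow_left₀ (le_max_right _ _) (max_le_max hxy (le_refl (0:ℝ))) k
  have hcont : ContinuousAt (fun x : ℝ => (max x 0) ^ k) r :=
    ((continuous_pow k).comp (continuous_id.max continuous_const)).continuousAt
  have hmap := hmono.map_limsup_of_continuousAt (vS A) hcont hvb hvcb
  have hφlim : Filter.limsup φ Filter.atTop = r ^ k := by
    have hfeq : (fun x : ℝ => (max x 0) ^ k) ∘ (vS A) = φ := by
      funext p
      simp only [Function.comp_apply, hφ]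
      rw [max_eq_left (vS_nonneg hm p)]
    rw [← hfeq, ← hmap, max_eq_left hr0]
  constructor
  · rw [hspec, ← hφlim]
    exact limsup_le_limsup_of_rpow_factor hc1 (Filter.Eventually.of_forall hA) hφ0 hw0 hwK
  · rw [hspec, ← hφlim]
    have hmonom : Monotone (fun x : ℝ => (m:ℝ) * x) := fun x y hxy =>
      mul_le_mul_of_nonneg_left hxy (by positivity)
    have hcontm : ContinuousAt (fun x : ℝ => (m:ℝ) * x) (Filter.limsup φ Filter.atTop) :=
      (continuous_const.mul continuous_id).continuousAt
    have hmapm := hmonom.map_limsup_of_continuousAt φ hcontm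
      (Filter.isBoundedUnder_of ⟨(KV A) ^ k, hφK⟩)
      (Filter.isCoboundedUnder_le_of_le Filter.atTop hφ0)
    calc Filter.limsup w Filter.atTop
        ≤ Filter.limsup (fun p => (m:ℝ) * φ p) Filter.atTop :=
          Filter.limsup_le_limsup (Filter.Eventually.of_forall hB)
            (Filter.isCoboundedUnder_le_of_le Filter.atTop hw0)
            (Filter.isBoundedUnder_of ⟨(m:ℝ) * (KV A) ^ k, fun p =>
              mul_le_mul_of_nonneg_left (hφK p) (by positivity)⟩)
      _ = (m:ℝ) * Filter.limsup φ Filter.atTop := hmapm.symm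

theorem jsr_eq_lim_of_nonneg_entries' (hm : 0 < m)
    (hpos : ∀ i a b, 0 ≤ A i a b) :
    Filter.Tendsto
      (fun k : ℕ => specRad (∑ i, kronPow (A i) k) ^ ((1 : ℝ) / (k : ℝ)))
      Filter.atTop (nhds (jsr A)) := by
  haveI : Nonempty (Fin m) := ⟨⟨0, hm⟩⟩
  set r := Filter.limsup (vS A) Filter.atTop with hr
  rw [jsr_eq_limsup_vS hm]
  have hvb : Filter.IsBoundedUnder (· ≤ ·) Filter.atTop (vS A) :=
    Filter.isBoundedUnder_of ⟨KV A, vS_le_KV hm⟩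
  have hr0 : 0 ≤ r :=
    Filter.le_limsup_of_frequently_le (Filter.Frequently.of_forall (vS_nonneg hm)) hvb
  have hm0 : (0:ℝ) < (m:ℝ) := by exact_mod_cast hm
  have hub : ∀ᶠ k : ℕ in Filter.atTop,
      specRad (∑ i, kronPow (A i) k) ^ ((1:ℝ)/(k:ℝ)) ≤ (m:ℝ) ^ ((1:ℝ)/(k:ℝ)) * r := by
    filter_upwards [Filter.eventually_ge_atTop 1] with k hk
    obtain ⟨h1, h2⟩ := specRad_bounds hm hpos k
    have hs0 : 0 ≤ specRad (∑ i, kronPow (A i) k) := le_trans (by positivity) h1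
    have hk0 : k ≠ 0 := Nat.one_le_iff_ne_zero.mp hk
    calc specRad (∑ i, kronPow (A i) k) ^ ((1:ℝ)/(k:ℝ))
        ≤ ((m:ℝ) * r ^ k) ^ ((1:ℝ)/(k:ℝ)) := Real.rpow_le_rpow hs0 h2 (by positivity)
      _ = (m:ℝ) ^ ((1:ℝ)/(k:ℝ)) * (r ^ k) ^ ((1:ℝ)/(k:ℝ)) :=
          Real.mul_rpow (by positivity) (by positivity)
      _ = (m:ℝ) ^ ((1:ℝ)/(k:ℝ)) * r := by rw [rpow_nat_root hr0 hk0]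
  have hlb : ∀ᶠ k : ℕ in Filter.atTop,
      r ≤ specRad (∑ i, kronPow (A i) k) ^ ((1:ℝ)/(k:ℝ)) := by
    filter_upwards [Filter.eventually_ge_atTop 1] with k hk
    obtain ⟨h1, _⟩ := specRad_bounds hm hpos k
    have hk0 : k ≠ 0 := Nat.one_le_iff_ne_zero.mp hk
    calc r = (r ^ k) ^ ((1:ℝ)/(k:ℝ)) := (rpow_nat_root hr0 hk0).symm
      _ ≤ specRad (∑ i, kronPow (A i) k) ^ ((1:ℝ)/(k:ℝ)) :=
          Real.rpow_le_rpow (by positivity) h1 (by positivity)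
  have hcm : Filter.Tendsto (fun k : ℕ => (m:ℝ) ^ ((1:ℝ)/(k:ℝ)) * r)
      Filter.atTop (nhds r) := by
    have := (tendsto_rpow_one_div hm0).mul_const r
    simpa using this
  exact tendsto_of_tendsto_of_tendsto_of_le_of_le' tendsto_const_nhds hcm hlb hub


end main

end JSRAux

/-- For matrices with nonnegative entries,
`ρ(A₁, …, Aₘ) = lim_{k→∞} ρ(A₁^{⊗k} + ⋯ + Aₘ^{⊗k})^{1/k}`. -/
theorem jsr_eq_lim_of_nonneg_entries {n m : ℕ} (hm : 0 < m)
    (A : Fin m → Matrix (Fin n) (Fin n) ℝ)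
    (hpos : ∀ i a b, 0 ≤ A i a b) :
    Filter.Tendsto
      (fun k : ℕ => specRad (∑ i, kronPow (A i) k) ^ ((1 : ℝ) / (k : ℝ)))
      Filter.atTop (nhds (jsr A)) := jsr_eq_lim_of_nonneg_entries' (A := A) hm hpos
end

section
/- Let A₁,…,Aₘ be real n×n matrices, and for each i let T_{Aᵢ} be the semidefinite lifting of Aᵢ, i.e., the linear operator X ↦ Aᵢ X Aᵢᵀ on the space S of real symmetric n×n matrices endowed with the Frobenius norm. Then the joint spectral radius of the operators T_{A₁},…,T_{Aₘ} equals the joint spectral radius of the Kronecker squares A₁⊗A₁,…,Aₘ⊗Aₘ, and both equal ρ(A₁,…,Aₘ)², the square of the joint spectral radius of A₁,…,Aₘ. -/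
open scoped Kronecker

open scoped Matrix

attribute [local instance]
  Matrix.frobeniusNormedAddCommGroup Matrix.frobeniusNormedSpace

/-- The space `S` of real symmetric `n × n` matrices (with the
Frobenius norm inherited from the matrix space). -/
def symMat (n : ℕ) : Submodule ℝ (Matrix (Fin n) (Fin n) ℝ) where
  carrier := {X | X.IsSymm}
  add_mem' := fun ha hb => ha.add hb
  zero_mem' := Matrix.isSymm_zero
  smul_mem' := fun c _ hx => hx.smul c

/-- The semidefinite lifting of `A` as a linear map `X ↦ A X Aᵀ` on the space
of symmetric matrices. -/
noncomputable def liftMap {n : ℕ} (A : Matrix (Fin n) (Fin n) ℝ) :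
    symMat n →ₗ[ℝ] symMat n where
  toFun X := ⟨A * X.1 * Aᵀ, by
    have hX : (X.1)ᵀ = X.1 := X.2
    show (A * X.1 * Aᵀ)ᵀ = A * X.1 * Aᵀ
    simp [Matrix.transpose_mul, Matrix.mul_assoc, hX]⟩
  map_add' X Y := by
    ext : 2
    simp [Matrix.mul_add, Matrix.add_mul]
  map_smul' c X := by
    ext : 2
    simp [Matrix.mul_smul, Matrix.smul_mul]

/-- The semidefinite lifting of `A` as a continuous linear operator
`X ↦ A X Aᵀ` on the space of symmetric matrices with the Frobenius norm. -/
noncomputable def liftCLM {n : ℕ} (A : Matrix (Fin n) (Fin n) ℝ) :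
    symMat n →L[ℝ] symMat n :=
  LinearMap.toContinuousLinearMap (liftMap A)

/-- The spectral radius of a continuous linear operator,
`ρ(B) = lim_k ‖B^k‖^{1/k}`. -/
noncomputable def specRadOp {E : Type*} [NormedAddCommGroup E]
    [NormedSpace ℝ E] (B : E →L[ℝ] E) : ℝ :=
  Filter.atTop.limsup fun k : ℕ => ‖B ^ k‖ ^ ((1 : ℝ) / (k : ℝ))

/-- The joint spectral radius of a finite family of continuous linear
operators on a normed space. -/
noncomputable def jsrOp {E : Type*} [NormedAddCommGroup E] [NormedSpace ℝ E]
    {m : ℕ} (T : Fin m → (E →L[ℝ] E)) : ℝ :=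
  Filter.atTop.limsup fun k : ℕ =>
    ⨆ σ : Fin k → Fin m,
      ‖(List.ofFn fun i => T (σ i)).reverse.prod‖ ^ ((1 : ℝ) / (k : ℝ))

set_option linter.unusedSectionVars false
set_option maxHeartbeats 1000000

open Filter

namespace JSRAux
open Matrix

section Core
variable {ι : Type*} [Fintype ι] [DecidableEq ι]

noncomputable def sqe {ι : Type*} [Fintype ι] (x : ι → ℝ) : ℝ := ∑ i, x i ^ 2

lemma sqe_nonneg {ι : Type*} [Fintype ι] (x : ι → ℝ) : 0 ≤ sqe x :=
  Finset.sum_nonneg fun _ _ => sq_nonneg _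

lemma norm_symm_eq (x : ι → ℝ) :
    ‖(WithLp.equiv 2 (ι → ℝ)).symm x‖ = Real.sqrt (sqe x) := by
  rw [EuclideanSpace.norm_eq]
  congr 1
  refine Finset.sum_congr rfl fun i _ => ?_
  rw [WithLp.equiv_symm_apply, WithLp.ofLp_toLp, Real.norm_eq_abs, sq_abs]

lemma l2OpNorm_nonneg (A : Matrix ι ι ℝ) : 0 ≤ l2OpNorm A := norm_nonneg _

lemma le_l2 (A : Matrix ι ι ℝ) (x : ι → ℝ) :
    Real.sqrt (sqe (A.mulVec x)) ≤ l2OpNorm A * Real.sqrt (sqe x) := by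
  have h := (Matrix.toEuclideanCLM (𝕜 := ℝ) A).le_opNorm ((WithLp.equiv 2 (ι → ℝ)).symm x)
  rwa [(show ∀ y, Matrix.toEuclideanCLM (𝕜 := ℝ) A ((WithLp.equiv 2 (ι → ℝ)).symm y) = (WithLp.equiv 2 (ι → ℝ)).symm (A *ᵥ y) from fun _ => rfl), norm_symm_eq,
    norm_symm_eq] at h

lemma l2_le {A : Matrix ι ι ℝ} {c : ℝ} (hc : 0 ≤ c)
    (h : ∀ x : ι → ℝ, Real.sqrt (sqe (A.mulVec x)) ≤ c * Real.sqrt (sqe x)) :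
    l2OpNorm A ≤ c := by
  refine ContinuousLinearMap.opNorm_le_bound _ hc fun v => ?_
  have hv : v = (WithLp.equiv 2 (ι → ℝ)).symm (WithLp.equiv 2 (ι → ℝ) v) :=
    (Equiv.symm_apply_apply _ _).symm
  rw [hv, (show ∀ y, Matrix.toEuclideanCLM (𝕜 := ℝ) A ((WithLp.equiv 2 (ι → ℝ)).symm y) = (WithLp.equiv 2 (ι → ℝ)).symm (A *ᵥ y) from fun _ => rfl), norm_symm_eq, norm_symm_eq]
  exact h _

lemma le_l2_sq (A : Matrix ι ι ℝ) (x : ι → ℝ) :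
    sqe (A.mulVec x) ≤ l2OpNorm A ^ 2 * sqe x := by
  have h := le_l2 A x
  have h2 := pow_le_pow_left₀ (Real.sqrt_nonneg _) h 2
  rwa [Real.sq_sqrt (sqe_nonneg _), mul_pow, Real.sq_sqrt (sqe_nonneg _)] at h2

lemma l2_le_of_sq {A : Matrix ι ι ℝ} {c : ℝ} (hc : 0 ≤ c)
    (h : ∀ x : ι → ℝ, sqe (A.mulVec x) ≤ c ^ 2 * sqe x) : l2OpNorm A ≤ c := by
  refine l2_le hc fun x => ?_
  have := Real.sqrt_le_sqrt (h x)
  rwa [Real.sqrt_mul (sq_nonneg c), Real.sqrt_sq hc] at this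

lemma kron_one_mulVec (A : Matrix ι ι ℝ) (w : ι × ι → ℝ) (i j : ι) :
    (A ⊗ₖ (1 : Matrix ι ι ℝ)).mulVec w (i, j) = A.mulVec (fun k => w (k, j)) i := by
  simp only [Matrix.mulVec, dotProduct, Fintype.sum_prod_type, Matrix.kroneckerMap_apply,
    Matrix.one_apply, mul_ite, mul_one, mul_zero, ite_mul, zero_mul, Finset.sum_ite_eq,
    Finset.mem_univ, if_true]

lemma one_kron_mulVec (A : Matrix ι ι ℝ) (w : ι × ι → ℝ) (i j : ι) :
    ((1 : Matrix ι ι ℝ) ⊗ₖ A).mulVec w (i, j) = A.mulVec (fun l => w (i, l)) j := by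
  simp only [Matrix.mulVec, dotProduct, Fintype.sum_prod_type, Matrix.kroneckerMap_apply,
    Matrix.one_apply, ite_mul, one_mul, zero_mul, mul_ite, mul_one, mul_zero]
  rw [Finset.sum_comm]
  simp only [Finset.sum_ite_eq, Finset.mem_univ, if_true]

lemma kron_mulVec_prod (A B : Matrix ι ι ℝ) (u v : ι → ℝ) (i j : ι) :
    (A ⊗ₖ B).mulVec (fun p => u p.1 * v p.2) (i, j) = A.mulVec u i * B.mulVec v j := by
  simp only [Matrix.mulVec, dotProduct, Fintype.sum_prod_type, Matrix.kroneckerMap_apply]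
  rw [Finset.sum_mul_sum]
  exact Finset.sum_congr rfl fun k _ => Finset.sum_congr rfl fun l _ => by ring

lemma sqe_prod (u v : ι → ℝ) : sqe (fun p : ι × ι => u p.1 * v p.2) = sqe u * sqe v := by
  simp only [sqe, Fintype.sum_prod_type, mul_pow, ← Finset.sum_mul, ← Finset.mul_sum]

lemma l2OpNorm_mul_le (A B : Matrix ι ι ℝ) :
    l2OpNorm (A * B) ≤ l2OpNorm A * l2OpNorm B := by
  unfold l2OpNorm
  rw [_root_.map_mul]
  exact norm_mul_le _ _

lemma l2OpNorm_one_le : l2OpNorm (1 : Matrix ι ι ℝ) ≤ 1 := by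
  unfold l2OpNorm
  rw [_root_.map_one]
  exact ContinuousLinearMap.norm_id_le

lemma kron_one_le (A : Matrix ι ι ℝ) :
    l2OpNorm (A ⊗ₖ (1 : Matrix ι ι ℝ)) ≤ l2OpNorm A := by
  refine l2_le_of_sq (l2OpNorm_nonneg A) fun w => ?_
  calc sqe ((A ⊗ₖ (1 : Matrix ι ι ℝ)).mulVec w)
      = ∑ j : ι, ∑ i : ι, (A.mulVec (fun k => w (k, j)) i) ^ 2 := by
        rw [sqe, Fintype.sum_prod_type, Finset.sum_comm]
        exact Finset.sum_congr rfl fun j _ => Finset.sum_congr rfl fun i _ => by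
          rw [kron_one_mulVec]
    _ ≤ ∑ j : ι, l2OpNorm A ^ 2 * sqe (fun k => w (k, j)) :=
        Finset.sum_le_sum fun j _ => le_l2_sq A _
    _ = l2OpNorm A ^ 2 * sqe w := by
        rw [← Finset.mul_sum, sqe, Fintype.sum_prod_type, Finset.sum_comm]; rfl

lemma one_kron_le (A : Matrix ι ι ℝ) :
    l2OpNorm ((1 : Matrix ι ι ℝ) ⊗ₖ A) ≤ l2OpNorm A := by
  refine l2_le_of_sq (l2OpNorm_nonneg A) fun w => ?_
  calc sqe (((1 : Matrix ι ι ℝ) ⊗ₖ A).mulVec w)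
      = ∑ i : ι, ∑ j : ι, (A.mulVec (fun l => w (i, l)) j) ^ 2 := by
        rw [sqe, Fintype.sum_prod_type]
        exact Finset.sum_congr rfl fun i _ => Finset.sum_congr rfl fun j _ => by
          rw [one_kron_mulVec]
    _ ≤ ∑ i : ι, l2OpNorm A ^ 2 * sqe (fun l => w (i, l)) :=
        Finset.sum_le_sum fun i _ => le_l2_sq A _
    _ = l2OpNorm A ^ 2 * sqe w := by
        rw [← Finset.mul_sum, sqe, Fintype.sum_prod_type]; rfl

lemma kron_le (A B : Matrix ι ι ℝ) :
    l2OpNorm (A ⊗ₖ B) ≤ l2OpNorm A * l2OpNorm B := by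
  have hfac : A ⊗ₖ B = (A ⊗ₖ (1 : Matrix ι ι ℝ)) * ((1 : Matrix ι ι ℝ) ⊗ₖ B) := by
    rw [← Matrix.mul_kronecker_mul, Matrix.mul_one, Matrix.one_mul]
  calc l2OpNorm (A ⊗ₖ B)
      ≤ l2OpNorm (A ⊗ₖ (1 : Matrix ι ι ℝ)) * l2OpNorm ((1 : Matrix ι ι ℝ) ⊗ₖ B) := by
        rw [hfac]; exact l2OpNorm_mul_le _ _
    _ ≤ l2OpNorm A * l2OpNorm B :=
        mul_le_mul (kron_one_le A) (one_kron_le B) (l2OpNorm_nonneg _) (l2OpNorm_nonneg _)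

lemma le_kron (A B : Matrix ι ι ℝ) :
    l2OpNorm A * l2OpNorm B ≤ l2OpNorm (A ⊗ₖ B) := by
  set K := l2OpNorm (A ⊗ₖ B) with hK
  have hK0 : 0 ≤ K := l2OpNorm_nonneg _
  have key : ∀ u v : ι → ℝ, Real.sqrt (sqe (A.mulVec u)) * Real.sqrt (sqe (B.mulVec v)) ≤
      K * (Real.sqrt (sqe u) * Real.sqrt (sqe v)) := by
    intro u v
    have h := le_l2 (A ⊗ₖ B) (fun p : ι × ι => u p.1 * v p.2)
    have e1 : ((A ⊗ₖ B).mulVec fun p : ι × ι => u p.1 * v p.2) =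
        (fun p : ι × ι => A.mulVec u p.1 * B.mulVec v p.2) :=
      funext fun p => kron_mulVec_prod A B u v p.1 p.2
    rw [e1, sqe_prod, sqe_prod, Real.sqrt_mul (sqe_nonneg _), Real.sqrt_mul (sqe_nonneg _)] at h
    exact h
  have step : ∀ v : ι → ℝ, l2OpNorm A * Real.sqrt (sqe (B.mulVec v)) ≤ K * Real.sqrt (sqe v) := by
    intro v
    rcases eq_or_lt_of_le (Real.sqrt_nonneg (sqe (B.mulVec v))) with h0 | h0
    · rw [← h0, mul_zero]
      positivity
    · have hA : l2OpNorm A ≤ K * Real.sqrt (sqe v) / Real.sqrt (sqe (B.mulVec v)) := by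
        refine l2_le (by positivity) fun u => ?_
        rw [div_mul_eq_mul_div, le_div_iff₀ h0]
        calc Real.sqrt (sqe (A.mulVec u)) * Real.sqrt (sqe (B.mulVec v))
            ≤ K * (Real.sqrt (sqe u) * Real.sqrt (sqe v)) := key u v
          _ = K * Real.sqrt (sqe v) * Real.sqrt (sqe u) := by ring
      calc l2OpNorm A * Real.sqrt (sqe (B.mulVec v))
          ≤ K * Real.sqrt (sqe v) / Real.sqrt (sqe (B.mulVec v)) * Real.sqrt (sqe (B.mulVec v)) :=
            mul_le_mul_of_nonneg_right hA (le_of_lt h0)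
        _ = K * Real.sqrt (sqe v) := div_mul_cancel₀ _ (ne_of_gt h0)
  rcases eq_or_lt_of_le (l2OpNorm_nonneg A) with h0 | h0
  · rw [← h0, zero_mul]; exact hK0
  · have hB : l2OpNorm B ≤ K / l2OpNorm A := by
      refine l2_le (by positivity) fun v => ?_
      rw [div_mul_eq_mul_div, le_div_iff₀ h0]
      calc Real.sqrt (sqe (B.mulVec v)) * l2OpNorm A
          = l2OpNorm A * Real.sqrt (sqe (B.mulVec v)) := by ring
        _ ≤ K * Real.sqrt (sqe v) := step v
    calc l2OpNorm A * l2OpNorm B ≤ l2OpNorm A * (K / l2OpNorm A) :=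
        mul_le_mul_of_nonneg_left hB (le_of_lt h0)
      _ = K := by field_simp

lemma l2OpNorm_kron (A B : Matrix ι ι ℝ) :
    l2OpNorm (A ⊗ₖ B) = l2OpNorm A * l2OpNorm B :=
  le_antisymm (kron_le A B) (le_kron A B)


end Core

section Lift
variable {n : ℕ}

lemma frob_norm_eq (X : Matrix (Fin n) (Fin n) ℝ) :
    ‖X‖ = Real.sqrt (∑ j, sqe fun i => X i j) := by
  rw [Matrix.frobenius_norm_def, Real.sqrt_eq_rpow]
  congr 1
  rw [Finset.sum_comm]
  refine Finset.sum_congr rfl fun j _ => Finset.sum_congr rfl fun i _ => ?_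
  rw [Real.norm_eq_abs, Real.rpow_two, sq_abs]

lemma frob_sq_eq (X : Matrix (Fin n) (Fin n) ℝ) :
    ‖X‖ ^ 2 = ∑ j, sqe fun i => X i j := by
  rw [frob_norm_eq, Real.sq_sqrt (Finset.sum_nonneg fun _ _ => sqe_nonneg _)]

lemma frob_mul_le (A X : Matrix (Fin n) (Fin n) ℝ) :
    ‖A * X‖ ≤ l2OpNorm A * ‖X‖ := by
  rw [frob_norm_eq, frob_norm_eq]
  have h : ∑ j, sqe (fun i => (A * X) i j) ≤ l2OpNorm A ^ 2 * ∑ j, sqe fun i => X i j := by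
    rw [Finset.mul_sum]
    refine Finset.sum_le_sum fun j _ => ?_
    have : (fun i => (A * X) i j) = A.mulVec fun k => X k j := by
      funext i; simp [Matrix.mul_apply, Matrix.mulVec, dotProduct]
    rw [this]
    exact le_l2_sq A _
  calc Real.sqrt (∑ j, sqe fun i => (A * X) i j)
      ≤ Real.sqrt (l2OpNorm A ^ 2 * ∑ j, sqe fun i => X i j) := Real.sqrt_le_sqrt h
    _ = l2OpNorm A * Real.sqrt (∑ j, sqe fun i => X i j) := by
        rw [Real.sqrt_mul (sq_nonneg _), Real.sqrt_sq (l2OpNorm_nonneg A)]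

lemma frob_mul_transpose_le (X A : Matrix (Fin n) (Fin n) ℝ) :
    ‖X * Aᵀ‖ ≤ l2OpNorm A * ‖X‖ := by
  rw [← Matrix.frobenius_norm_transpose, Matrix.transpose_mul, Matrix.transpose_transpose,
    ← Matrix.frobenius_norm_transpose X]
  exact frob_mul_le A Xᵀ

lemma mul_vecMulVec_mul (A : Matrix (Fin n) (Fin n) ℝ) (u v : Fin n → ℝ) :
    A * Matrix.vecMulVec u v * Aᵀ = Matrix.vecMulVec (A.mulVec u) (A.mulVec v) := by
  ext i j
  simp only [Matrix.mul_apply, Matrix.vecMulVec_apply, Matrix.transpose_apply,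
    Matrix.mulVec, dotProduct]
  rw [Finset.sum_mul_sum]
  rw [Finset.sum_comm]
  simp only [Finset.sum_mul]
  refine Finset.sum_congr rfl fun l _ => Finset.sum_congr rfl fun k _ => by ring

lemma frob_vecMulVec_self (u : Fin n → ℝ) : ‖Matrix.vecMulVec u u‖ = sqe u := by
  rw [frob_norm_eq]
  have : ∑ j, sqe (fun i => Matrix.vecMulVec u u i j) = sqe u * sqe u := by
    simp only [Matrix.vecMulVec_apply, sqe, mul_pow, ← Finset.sum_mul, ← Finset.mul_sum]
  rw [this, Real.sqrt_mul_self (sqe_nonneg u)]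

lemma vecMulVec_self_isSymm (u : Fin n → ℝ) : (Matrix.vecMulVec u u).IsSymm := by
  ext i j
  simp [Matrix.vecMulVec_apply, Matrix.transpose_apply, mul_comm]

lemma liftCLM_apply (A : Matrix (Fin n) (Fin n) ℝ) (X : symMat n) :
    ((liftCLM A X : symMat n) : Matrix (Fin n) (Fin n) ℝ) = A * (X : Matrix (Fin n) (Fin n) ℝ) * Aᵀ :=
  rfl

lemma norm_symMat (X : symMat n) : ‖X‖ = ‖(X : Matrix (Fin n) (Fin n) ℝ)‖ := rfl

abbrev OpOn (E : Type*) [NormedAddCommGroup E] [NormedSpace ℝ E] := E →L[ℝ] E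

lemma liftCLM_norm (A : Matrix (Fin n) (Fin n) ℝ) :
    @norm (OpOn (symMat n)) _ (liftCLM A) = l2OpNorm A ^ 2 := by
  apply le_antisymm
  · refine ContinuousLinearMap.opNorm_le_bound _ (sq_nonneg _) fun X => ?_
    rw [norm_symMat, norm_symMat]; erw [liftCLM_apply]
    calc ‖A * (X : Matrix (Fin n) (Fin n) ℝ) * Aᵀ‖
        ≤ l2OpNorm A * ‖(X : Matrix (Fin n) (Fin n) ℝ) * Aᵀ‖ := by
          rw [Matrix.mul_assoc]; exact frob_mul_le A _
      _ ≤ l2OpNorm A * (l2OpNorm A * ‖(X : Matrix (Fin n) (Fin n) ℝ)‖) :=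
          mul_le_mul_of_nonneg_left (frob_mul_transpose_le _ A) (l2OpNorm_nonneg A)
      _ = l2OpNorm A ^ 2 * ‖(X : Matrix (Fin n) (Fin n) ℝ)‖ := by ring
  · have hc : 0 ≤ @norm (OpOn (symMat n)) _ (liftCLM A) := ContinuousLinearMap.opNorm_nonneg _
    have key : l2OpNorm A ≤ Real.sqrt (@norm (OpOn (symMat n)) _ (liftCLM A)) := by
      refine l2_le_of_sq (Real.sqrt_nonneg _) fun u => ?_
      rw [Real.sq_sqrt hc]
      set X : symMat n := ⟨Matrix.vecMulVec u u, vecMulVec_self_isSymm u⟩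
      have h1 := (liftCLM A).le_opNorm X
      rw [norm_symMat, norm_symMat] at h1; erw [liftCLM_apply] at h1
      have h2 : (X : Matrix (Fin n) (Fin n) ℝ) = Matrix.vecMulVec u u := rfl
      rw [h2, mul_vecMulVec_mul, frob_vecMulVec_self, frob_vecMulVec_self] at h1
      exact h1
    have := pow_le_pow_left₀ (l2OpNorm_nonneg A) key 2
    rwa [Real.sq_sqrt hc] at this


/-- The semidefinite lifting as a monoid hom. -/
noncomputable def liftHom (n : ℕ) : Matrix (Fin n) (Fin n) ℝ →* (symMat n →L[ℝ] symMat n) where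
  toFun := liftCLM
  map_one' := by
    ext X : 1
    rw [ContinuousLinearMap.one_apply]
    refine Subtype.ext ?_
    show (1 : Matrix (Fin n) (Fin n) ℝ) * (X : Matrix (Fin n) (Fin n) ℝ) *
      (1 : Matrix (Fin n) (Fin n) ℝ)ᵀ = (X : Matrix (Fin n) (Fin n) ℝ)
    simp
  map_mul' A B := by
    ext X : 1
    rw [ContinuousLinearMap.mul_apply]
    refine Subtype.ext ?_
    show (A * B) * (X : Matrix (Fin n) (Fin n) ℝ) * (A * B)ᵀ =
      A * (B * (X : Matrix (Fin n) (Fin n) ℝ) * Bᵀ) * Aᵀ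
    rw [Matrix.transpose_mul]
    simp [Matrix.mul_assoc]

/-- The Kronecker square as a monoid hom. -/
noncomputable def kronSqHom (ι : Type*) [Fintype ι] [DecidableEq ι] :
    Matrix ι ι ℝ →* Matrix (ι × ι) (ι × ι) ℝ where
  toFun A := A ⊗ₖ A
  map_one' := Matrix.one_kronecker_one
  map_mul' A B := Matrix.mul_kronecker_mul A B A B

end Lift

lemma wordProd_hom {M N : Type*} [Monoid M] [Monoid N] (f : M →* N) {k : ℕ} (a : Fin k → M) :
    (List.ofFn fun i => f (a i)).reverse.prod = f (List.ofFn a).reverse.prod := by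
  rw [show (List.ofFn fun i => f (a i)) = (List.ofFn a).map f from by
      rw [List.map_ofFn]; rfl,
    ← List.map_reverse, List.prod_hom]

lemma phi_mono : Monotone fun x : ℝ => x * |x| := by
  intro a b hab
  simp only
  rcases abs_cases a with ⟨ha, _⟩ | ⟨ha, _⟩ <;> rcases abs_cases b with ⟨hb, _⟩ | ⟨hb, _⟩ <;>
    rw [ha, hb] <;> nlinarith

lemma limsup_sq {f : ℕ → ℝ} (h0 : ∀ k, 0 ≤ f k) {C : ℝ} (hC : ∀ k, f k ≤ C) :
    Filter.atTop.limsup (fun k => f k ^ 2) = (Filter.atTop.limsup f) ^ 2 := by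
  have hbdd : Filter.atTop.IsBoundedUnder (· ≤ ·) f := Filter.isBoundedUnder_of ⟨C, hC⟩
  have hbdd' : Filter.atTop.IsBoundedUnder (· ≥ ·) f := Filter.isBoundedUnder_of ⟨0, h0⟩
  have hcobdd : Filter.atTop.IsCoboundedUnder (· ≤ ·) f := hbdd'.isCoboundedUnder_le
  have hlim0 : 0 ≤ Filter.atTop.limsup f :=
    Filter.le_limsup_of_frequently_le ((Filter.Eventually.of_forall h0).frequently) hbdd
  have hmap := phi_mono.map_limsup_of_continuousAt f
    ((continuous_id.mul continuous_abs).continuousAt) hbdd hcobdd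
  have e1 : (fun x : ℝ => x * |x|) ∘ f = fun k => f k ^ 2 := by
    funext k; simp [abs_of_nonneg (h0 k), sq]
  rw [e1] at hmap
  rw [← hmap, abs_of_nonneg hlim0, sq]

lemma sq_rpow {x : ℝ} (hx : 0 ≤ x) (r : ℝ) : (x ^ 2) ^ r = (x ^ r) ^ 2 := by
  have h1 : (x ^ 2) ^ r = x ^ ((2 : ℝ) * r) := by
    rw [← Real.rpow_natCast x 2, ← Real.rpow_mul hx]; norm_num
  have h2 : (x ^ r) ^ 2 = x ^ (r * (2 : ℝ)) := by
    rw [← Real.rpow_natCast (x ^ r) 2, ← Real.rpow_mul hx]; norm_num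
  rw [h1, h2, mul_comm]

lemma ciSup_sq {α : Type*} [Fintype α] [Nonempty α] (g : α → ℝ) (hg : ∀ i, 0 ≤ g i) :
    (⨆ i, g i ^ 2) = (⨆ i, g i) ^ 2 := by
  obtain ⟨i0, h0⟩ := exists_eq_ciSup_of_finite (f := g)
  obtain ⟨i1, h1⟩ := exists_eq_ciSup_of_finite (f := fun i => g i ^ 2)
  apply le_antisymm
  · rw [← h1]
    exact pow_le_pow_left₀ (hg i1)
      (h0 ▸ le_ciSup (Set.Finite.bddAbove (Set.finite_range g)) i1) 2
  · rw [← h0]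
    exact le_ciSup (f := fun i => g i ^ 2) (Set.Finite.bddAbove (Set.finite_range _)) i0


lemma l2_list_prod_le {ι : Type*} [Fintype ι] [DecidableEq ι] {C : ℝ} (hC : 1 ≤ C)
    (l : List (Matrix ι ι ℝ)) (h : ∀ x ∈ l, l2OpNorm x ≤ C) :
    l2OpNorm l.prod ≤ C ^ l.length := by
  induction l with
  | nil =>
      rw [List.prod_nil, List.length_nil, pow_zero]
      exact l2OpNorm_one_le
  | cons a t ih =>
      rw [List.prod_cons, List.length_cons, pow_succ']
      calc l2OpNorm (a * t.prod) ≤ l2OpNorm a * l2OpNorm t.prod := l2OpNorm_mul_le _ _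
        _ ≤ C * C ^ t.length :=
            mul_le_mul (h a List.mem_cons_self) (ih fun x hx => h x (List.mem_cons_of_mem a hx))
              (l2OpNorm_nonneg _) (le_trans zero_le_one hC)

end JSRAux

/-- The joint spectral radius of the semidefinite liftings equals the joint
spectral radius of the Kronecker squares, and both equal `ρ(A₁, …, Aₘ)²`. -/
theorem jsr_lift_eq_jsr_kroneckerSquare {n m : ℕ} (hm : 0 < m)
    (A : Fin m → Matrix (Fin n) (Fin n) ℝ) :
    jsrOp (fun i => liftCLM (A i)) = jsr (fun i => (A i) ⊗ₖ (A i)) ∧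
      jsr (fun i => (A i) ⊗ₖ (A i)) = jsr A ^ 2 := by
  haveI : Nonempty (Fin m) := Fin.pos_iff_nonempty.mp hm
  have hkronword : ∀ {k : ℕ} (σ : Fin k → Fin m),
      wordProd (fun i => (A i) ⊗ₖ (A i)) σ = (wordProd A σ) ⊗ₖ (wordProd A σ) := by
    intro k σ
    unfold wordProd
    exact JSRAux.wordProd_hom (JSRAux.kronSqHom (Fin n)) (fun i => A (σ i))
  have hliftword : ∀ {k : ℕ} (σ : Fin k → Fin m),
      (List.ofFn fun i => liftCLM (A (σ i))).reverse.prod = liftCLM (wordProd A σ) := by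
    intro k σ
    unfold wordProd
    exact JSRAux.wordProd_hom (JSRAux.liftHom n) (fun i => A (σ i))
  have hkronnorm : ∀ {k : ℕ} (σ : Fin k → Fin m),
      l2OpNorm (wordProd (fun i => (A i) ⊗ₖ (A i)) σ) = l2OpNorm (wordProd A σ) ^ 2 := by
    intro k σ
    rw [hkronword σ, JSRAux.l2OpNorm_kron, sq]
  -- first equality
  have e1 : jsrOp (fun i => liftCLM (A i)) = jsr (fun i => (A i) ⊗ₖ (A i)) := by
    unfold jsrOp jsr
    congr 1
    funext k
    refine iSup_congr fun σ => ?_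
    erw [hliftword σ, JSRAux.liftCLM_norm]; rw [hkronnorm σ]
  -- bounds
  set F : ℕ → ℝ := fun k => ⨆ σ : Fin k → Fin m,
    l2OpNorm (wordProd A σ) ^ ((1 : ℝ) / (k : ℝ)) with hF
  have hFnonneg : ∀ k, 0 ≤ F k := fun k =>
    Real.iSup_nonneg fun σ => Real.rpow_nonneg (JSRAux.l2OpNorm_nonneg _) _
  set C : ℝ := 1 + ∑ i, l2OpNorm (A i) with hC
  have hsum0 : 0 ≤ ∑ i, l2OpNorm (A i) :=
    Finset.sum_nonneg fun i _ => JSRAux.l2OpNorm_nonneg _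
  have hC1 : 1 ≤ C := le_add_of_nonneg_right hsum0
  have hC0 : 0 ≤ C := le_trans zero_le_one hC1
  have hAC : ∀ i, l2OpNorm (A i) ≤ C := by
    intro i
    have h1 : l2OpNorm (A i) ≤ ∑ j, l2OpNorm (A j) :=
      Finset.single_le_sum (fun j _ => JSRAux.l2OpNorm_nonneg _) (Finset.mem_univ i)
    linarith
  have hword : ∀ {k : ℕ} (σ : Fin k → Fin m), l2OpNorm (wordProd A σ) ≤ C ^ k := by
    intro k σ
    have happ := JSRAux.l2_list_prod_le hC1 ((List.ofFn fun i => A (σ i)).reverse) ?_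
    · rwa [List.length_reverse, List.length_ofFn] at happ
    · intro x hx
      rw [List.mem_reverse, List.mem_ofFn] at hx
      obtain ⟨i, rfl⟩ := hx
      exact hAC _
  have hFC : ∀ k, F k ≤ C := by
    intro k
    refine Real.iSup_le (fun σ => ?_) hC0
    rcases Nat.eq_zero_or_pos k with rfl | hk
    · rw [Nat.cast_zero, div_zero, Real.rpow_zero]
      exact hC1
    · have h2 : l2OpNorm (wordProd A σ) ^ ((1 : ℝ) / (k : ℝ)) ≤ (C ^ k) ^ ((1 : ℝ) / (k : ℝ)) :=
        Real.rpow_le_rpow (JSRAux.l2OpNorm_nonneg _) (hword σ) (by positivity)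
      rwa [← Real.rpow_natCast C k, ← Real.rpow_mul hC0, mul_one_div,
        div_self (Nat.cast_ne_zero.mpr hk.ne'), Real.rpow_one] at h2
  -- second equality
  have e2 : jsr (fun i => (A i) ⊗ₖ (A i)) = jsr A ^ 2 := by
    have hterm : (fun k : ℕ => ⨆ σ : Fin k → Fin m,
        l2OpNorm (wordProd (fun i => (A i) ⊗ₖ (A i)) σ) ^ ((1 : ℝ) / (k : ℝ))) =
        fun k => F k ^ 2 := by
      funext k
      have h3 : ∀ σ : Fin k → Fin m,
          l2OpNorm (wordProd (fun i => (A i) ⊗ₖ (A i)) σ) ^ ((1 : ℝ) / (k : ℝ)) =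
          (l2OpNorm (wordProd A σ) ^ ((1 : ℝ) / (k : ℝ))) ^ 2 := fun σ => by
        rw [hkronnorm σ, JSRAux.sq_rpow (JSRAux.l2OpNorm_nonneg _)]
      rw [iSup_congr h3]
      exact JSRAux.ciSup_sq _ fun σ => Real.rpow_nonneg (JSRAux.l2OpNorm_nonneg _) _
    have : jsr A = Filter.atTop.limsup F := rfl
    rw [jsr, hterm, this, JSRAux.limsup_sq hFnonneg hFC]
  exact ⟨e1.trans rfl, e2⟩
end

section
/- Let A₁,…,Aₘ be real n×n matrices and let B be the linear operator X ↦ A₁ X A₁ᵀ + ··· + Aₘ X Aₘᵀ on the space of real symmetric n×n matrices endowed with the Frobenius norm. Then ρ̂(A₁,…,Aₘ) ≤ ρ(B)^{1/2}, where ρ̂ is the ellipsoid approximation and ρ(B) = lim_{k→∞} ‖B^k‖^{1/k} is the spectral radius of the operator B. -/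
open scoped Kronecker

open scoped Matrix

attribute [local instance]
  Matrix.frobeniusNormedAddCommGroup Matrix.frobeniusNormedSpace

open scoped Matrix

/-- The ellipsoid approximation of the joint spectral radius of
`A₁, …, Aₘ`. -/
noncomputable def ellips {N m : ℕ} (A : Fin m → Matrix (Fin N) (Fin N) ℝ) :
    ℝ :=
  Real.sqrt (sInf {τ : ℝ | ∃ X : Matrix (Fin N) (Fin N) ℝ, X.PosDef ∧
    ∀ i, (τ • X - A i * X * (A i)ᵀ).PosSemidef})
namespace EllipsAux

open Filter Matrix

variable {n : ℕ}

lemma psd_smul {c : ℝ} (hc : 0 ≤ c) {M : Matrix (Fin n) (Fin n) ℝ}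
    (hM : M.PosSemidef) : (c • M).PosSemidef := by
  refine Matrix.PosSemidef.of_dotProduct_mulVec_nonneg ?_ fun x => ?_
  · unfold Matrix.IsHermitian
    rw [conjTranspose_smul, hM.1]
    simp
  · simp only [smul_mulVec, dotProduct_smul, smul_eq_mul]
    exact mul_nonneg hc (hM.dotProduct_mulVec_nonneg x)

lemma psd_sum {ι : Type*} (s : Finset ι) (f : ι → Matrix (Fin n) (Fin n) ℝ)
    (hf : ∀ i ∈ s, (f i).PosSemidef) : (∑ i ∈ s, f i).PosSemidef := by
  classical
  induction s using Finset.induction with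
  | empty => simpa using Matrix.PosSemidef.zero
  | insert _ _ h ih =>
    rw [Finset.sum_insert h]
    exact (hf _ (Finset.mem_insert_self _ _)).add
      (ih fun i hi => hf i (Finset.mem_insert_of_mem hi))

/-- The coercion of `(∑ i, liftCLM (A i)) X` to a matrix. -/
lemma coe_B_apply {m : ℕ} (A : Fin m → Matrix (Fin n) (Fin n) ℝ)
    (X : symMat n) :
    (((∑ i, liftCLM (A i)) X : symMat n) : Matrix (Fin n) (Fin n) ℝ)
      = ∑ i, A i * (X : Matrix (Fin n) (Fin n) ℝ) * (A i)ᵀ := by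
  rw [ContinuousLinearMap.sum_apply, Submodule.coe_sum]
  rfl

lemma psd_B_apply {m : ℕ} (A : Fin m → Matrix (Fin n) (Fin n) ℝ)
    (X : symMat n) (hX : (X : Matrix (Fin n) (Fin n) ℝ).PosSemidef) :
    (((∑ i, liftCLM (A i)) X : symMat n) : Matrix (Fin n) (Fin n) ℝ).PosSemidef := by
  rw [coe_B_apply]
  refine psd_sum _ _ fun i _ => ?_
  simpa [Matrix.conjTranspose_eq_transpose_of_trivial] using
    hX.mul_mul_conjTranspose_same (A i)

lemma psd_Bpow_apply {m : ℕ} (A : Fin m → Matrix (Fin n) (Fin n) ℝ)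
    (X : symMat n) (hX : (X : Matrix (Fin n) (Fin n) ℝ).PosSemidef) (k : ℕ) :
    ((((∑ i, liftCLM (A i)) ^ k) X : symMat n) : Matrix (Fin n) (Fin n) ℝ).PosSemidef := by
  induction k with
  | zero => simpa using hX
  | succ k ih =>
    rw [pow_succ', ContinuousLinearMap.mul_apply]
    exact psd_B_apply A _ ih

/-- The quadratic form `X ↦ v ⬝ᵥ X *ᵥ v` as a continuous linear map on
the space of symmetric matrices. -/
noncomputable def quadCLM (v : Fin n → ℝ) : symMat n →L[ℝ] ℝ :=
  LinearMap.toContinuousLinearMap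
    { toFun := fun X => v ⬝ᵥ ((X : Matrix (Fin n) (Fin n) ℝ) *ᵥ v)
      map_add' := by
        intro X Y
        simp [Matrix.add_mulVec, dotProduct_add]
      map_smul' := by
        intro c X
        simp [Matrix.smul_mulVec, dotProduct_smul] }

lemma quadCLM_apply (v : Fin n → ℝ) (X : symMat n) :
    quadCLM v X = v ⬝ᵥ ((X : Matrix (Fin n) (Fin n) ℝ) *ᵥ v) := rfl

lemma psd_tsum (g : ℕ → symMat n) (hg : Summable g)
    (h : ∀ k, ((g k : symMat n) : Matrix (Fin n) (Fin n) ℝ).PosSemidef) :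
    (((∑' k, g k : symMat n)) : Matrix (Fin n) (Fin n) ℝ).PosSemidef := by
  refine Matrix.PosSemidef.of_dotProduct_mulVec_nonneg ?_ fun x => ?_
  · unfold Matrix.IsHermitian
    rw [Matrix.conjTranspose_eq_transpose_of_trivial]
    exact (∑' k, g k : symMat n).2
  · have hmap : quadCLM x (∑' k, g k) = ∑' k, quadCLM x (g k) :=
      (quadCLM x).map_tsum hg
    have hx : (star x : Fin n → ℝ) = x := by simp
    have : (0 : ℝ) ≤ quadCLM x (∑' k, g k) := by
      rw [hmap]
      refine tsum_nonneg fun k => ?_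
      have := (h k).dotProduct_mulVec_nonneg x
      rwa [hx] at this
    rw [quadCLM_apply] at this
    rwa [hx]

noncomputable instance symMatCLMNormedRing : NormedRing (symMat n →L[ℝ] symMat n) :=
  ContinuousLinearMap.toNormedRing
noncomputable instance symMatCLMNormedSpace : NormedSpace ℝ (symMat n →L[ℝ] symMat n) :=
  ContinuousLinearMap.toNormedSpace

/-- Any `τ` strictly above the spectral radius of `B` belongs to the
defining set of the ellipsoid approximation. -/
lemma mem_of_specRad_lt {m : ℕ} (A : Fin m → Matrix (Fin n) (Fin n) ℝ)
    {τ : ℝ} (hτ : specRadOp (∑ i, liftCLM (A i)) < τ) :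
    τ ∈ {τ : ℝ | ∃ X : Matrix (Fin n) (Fin n) ℝ, X.PosDef ∧
      ∀ i, (τ • X - A i * X * (A i)ᵀ).PosSemidef} := by
  classical
  set B : symMat n →L[ℝ] symMat n := ∑ i, liftCLM (A i) with hB
  set f : ℕ → ℝ := fun k => ‖B ^ k‖ ^ ((1 : ℝ) / (k : ℝ)) with hf
  have hf0 : ∀ k, 0 ≤ f k := fun k => by
    simp only [hf]; exact Real.rpow_nonneg (norm_nonneg (B ^ k)) _
  have hbdd : IsBoundedUnder (· ≤ ·) atTop f := by
    refine Filter.isBoundedUnder_of ⟨max 1 ‖B‖, fun k => ?_⟩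
    rcases Nat.eq_zero_or_pos k with hk | hk
    · subst hk
      simp [hf]
    · have h1 : ‖B ^ k‖ ≤ (max 1 ‖B‖) ^ k := by
        calc ‖B ^ k‖ ≤ ‖B‖ ^ k := norm_pow_le' B hk
          _ ≤ (max 1 ‖B‖) ^ k :=
            by exact pow_le_pow_left₀ (norm_nonneg B) (le_max_right 1 ‖B‖) k
      have hM0 : (0 : ℝ) ≤ max 1 ‖B‖ := le_trans zero_le_one (le_max_left _ _)
      calc f k ≤ ((max 1 ‖B‖) ^ k) ^ ((1 : ℝ) / (k : ℝ)) := by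
            simp only [hf]
            exact Real.rpow_le_rpow (norm_nonneg (B ^ k)) h1 (by positivity)
        _ = max 1 ‖B‖ := by
            rw [one_div]
            exact Real.pow_rpow_inv_natCast hM0 hk.ne'
  have hρ0 : 0 ≤ specRadOp B :=
    Filter.le_limsup_of_frequently_le (Filter.Frequently.of_forall hf0) hbdd
  have hτ0 : 0 < τ := lt_of_le_of_lt hρ0 hτ
  set τ' : ℝ := (specRadOp B + τ) / 2 with hτ'
  have hτ'0 : 0 < τ' := by positivity
  have hρτ' : specRadOp B < τ' := by rw [hτ']; linarith [show specRadOp B < τ from hτ]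
  have hτ'τ : τ' < τ := by rw [hτ']; linarith [show specRadOp B < τ from hτ]
  clear_value τ'
  have hev : ∀ᶠ k in atTop, f k < τ' :=
    Filter.eventually_lt_of_limsup_lt hρτ' hbdd
  have hevB : ∀ᶠ k in atTop, ‖B ^ k‖ ≤ τ' ^ k := by
    filter_upwards [hev, Filter.eventually_ge_atTop 1] with k hk hk1
    have hfk : f k ^ k = ‖B ^ k‖ := by
      simp only [hf, one_div]
      exact Real.rpow_inv_natCast_pow (norm_nonneg (B ^ k)) (Nat.one_le_iff_ne_zero.1 hk1)
    rw [← hfk]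
    exact pow_le_pow_left₀ (hf0 k) hk.le k
  -- the identity matrix as an element of `symMat n`
  set E : symMat n := ⟨(1 : Matrix (Fin n) (Fin n) ℝ), Matrix.isSymm_one⟩ with hE
  set g : ℕ → symMat n := fun k => (τ⁻¹) ^ k • ((B ^ k) E) with hg
  have hgsum : Summable g := by
    refine Summable.of_norm_bounded_eventually_nat (g := fun k => ‖E‖ * (τ' / τ) ^ k)
      (((summable_geometric_of_lt_one (by positivity)
        ((div_lt_one hτ0).2 hτ'τ)).mul_left _)) ?_
    filter_upwards [hevB] with k hk
    have hng : ‖g k‖ ≤ (τ⁻¹) ^ k * ‖(B ^ k) E‖ := by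
      have h := norm_smul_le ((τ⁻¹ : ℝ) ^ k) ((B ^ k) E)
      have habs : ‖(τ⁻¹ : ℝ) ^ k‖ = (τ⁻¹) ^ k := by
        rw [norm_pow, Real.norm_eq_abs, abs_of_pos (inv_pos.2 hτ0)]
      simpa only [hg, habs] using h
    refine le_trans hng ?_
    calc (τ⁻¹) ^ k * ‖(B ^ k) E‖ ≤ (τ⁻¹) ^ k * (‖B ^ k‖ * ‖E‖) :=
          mul_le_mul_of_nonneg_left ((B ^ k).le_opNorm E) (by positivity)
      _ ≤ (τ⁻¹) ^ k * (τ' ^ k * ‖E‖) :=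
          mul_le_mul_of_nonneg_left
            (mul_le_mul_of_nonneg_right hk (norm_nonneg _)) (by positivity)
      _ = ‖E‖ * (τ' / τ) ^ k := by
          rw [div_pow, inv_pow, div_eq_mul_inv]
          ring
  set X : symMat n := ∑' k, g k with hX
  have hg0 : g 0 = E := by simp [hg]; exact congrArg (fun T => T E) (pow_zero B)
  have hshift : Summable fun k => g (k + 1) := (summable_nat_add_iff 1).2 hgsum
  have hXsplit : X = E + ∑' k, g (k + 1) := by
    rw [hX, Summable.tsum_eq_zero_add hgsum, hg0]
  -- the fixed point identity : τ • X = τ • E + B X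
  have hkey : τ • X = τ • E + B X := by
    have hBX : B X = ∑' k, (τ⁻¹) ^ k • ((B ^ (k + 1)) E) := by
      rw [hX, B.map_tsum hgsum]
      refine tsum_congr fun k => ?_
      simp only [hg]
      rw [B.map_smul]
      congr 1
      exact (congrArg (fun T => T E) (pow_succ' B k)).symm
    have hτg : ∀ k, τ • g (k + 1) = (τ⁻¹) ^ k • ((B ^ (k + 1)) E) := by
      intro k
      rw [hg]
      simp only [smul_smul]
      congr 1
      rw [pow_succ' τ⁻¹ k, ← mul_assoc, mul_inv_cancel₀ hτ0.ne', one_mul]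
    calc τ • X = τ • E + τ • ∑' k, g (k + 1) := by
          rw [hXsplit, smul_add]
      _ = τ • E + ∑' k, τ • g (k + 1) := by
          rw [Summable.tsum_const_smul τ hshift]
      _ = τ • E + B X := by
          rw [hBX]
          congr 1
          exact tsum_congr hτg
  -- positive semidefiniteness facts
  have hEpsd : ((E : symMat n) : Matrix (Fin n) (Fin n) ℝ).PosSemidef :=
    Matrix.PosSemidef.one
  have hgpsd : ∀ k, ((g k : symMat n) : Matrix (Fin n) (Fin n) ℝ).PosSemidef := by
    intro k
    rw [hg]
    exact psd_smul (by positivity) (psd_Bpow_apply A E hEpsd k)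
  have hXpsd : ((X : symMat n) : Matrix (Fin n) (Fin n) ℝ).PosSemidef :=
    psd_tsum g hgsum hgpsd
  have hXpd : ((X : symMat n) : Matrix (Fin n) (Fin n) ℝ).PosDef := by
    have h2 : (((∑' k, g (k + 1) : symMat n)) :
        Matrix (Fin n) (Fin n) ℝ).PosSemidef :=
      psd_tsum _ hshift fun k => hgpsd (k + 1)
    have : ((X : symMat n) : Matrix (Fin n) (Fin n) ℝ)
        = 1 + ((∑' k, g (k + 1) : symMat n) : Matrix (Fin n) (Fin n) ℝ) := by
      rw [hXsplit]; rfl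
    rw [this]
    exact Matrix.PosDef.one.add_posSemidef h2
  -- the matrix-level identity
  set Y : Matrix (Fin n) (Fin n) ℝ := (X : Matrix (Fin n) (Fin n) ℝ) with hY
  have h2 : ((B X : symMat n) : Matrix (Fin n) (Fin n) ℝ)
      = ∑ i, A i * Y * (A i)ᵀ := by
    rw [hB]
    exact coe_B_apply A X
  have hmat : τ • Y = τ • (1 : Matrix (Fin n) (Fin n) ℝ)
      + ∑ i, A i * Y * (A i)ᵀ := by
    have h1 : ((τ • X : symMat n) : Matrix (Fin n) (Fin n) ℝ)
        = ((τ • E + B X : symMat n) : Matrix (Fin n) (Fin n) ℝ) := by rw [hkey]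
    rw [Submodule.coe_add, Submodule.coe_smul, Submodule.coe_smul, h2] at h1
    exact h1
  refine ⟨Y, hXpd, fun i => ?_⟩
  have hsplit : ∑ j, A j * Y * (A j)ᵀ
      = A i * Y * (A i)ᵀ + ∑ j ∈ Finset.univ.erase i, A j * Y * (A j)ᵀ :=
    (Finset.add_sum_erase _ _ (Finset.mem_univ i)).symm
  have : τ • Y - A i * Y * (A i)ᵀ
      = τ • (1 : Matrix (Fin n) (Fin n) ℝ)
        + ∑ j ∈ Finset.univ.erase i, A j * Y * (A j)ᵀ := by
    rw [hmat, hsplit]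
    abel
  rw [this]
  refine (psd_smul hτ0.le Matrix.PosSemidef.one).add (psd_sum _ _ fun j _ => ?_)
  simpa [Matrix.conjTranspose_eq_transpose_of_trivial] using
    hXpsd.mul_mul_conjTranspose_same (A j)

end EllipsAux

/-- The ellipsoid approximation is bounded above by the square root of the
spectral radius of `B : X ↦ ∑ᵢ Aᵢ X Aᵢᵀ`. -/
theorem ellips_le_sqrt_specRad_lift {n m : ℕ} (hm : 0 < m)
    (A : Fin m → Matrix (Fin n) (Fin n) ℝ) :
    ellips A ≤ Real.sqrt (specRadOp (∑ i, liftCLM (A i))) := by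
  classical
  set S : Set ℝ := {τ : ℝ | ∃ X : Matrix (Fin n) (Fin n) ℝ, X.PosDef ∧
    ∀ i, (τ • X - A i * X * (A i)ᵀ).PosSemidef} with hS
  rw [ellips]
  by_cases hbd : BddBelow S
  · refine Real.sqrt_le_sqrt ?_
    refine le_of_forall_pos_le_add fun ε hε => ?_
    refine csInf_le hbd ?_
    exact EllipsAux.mem_of_specRad_lt A (by linarith)
  · rw [csInf_of_not_bddBelow hbd, Real.sInf_empty, Real.sqrt_zero]
    exact Real.sqrt_nonneg _
end
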